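/- arXiv:1412.1749 — 3 statements merged into one kernel-verified Lean document; each statement's English description precedes it below -/
import Mathlib

section
/- If γ₁ and γ₂ are F_σ (respectively G_δ) cones in T*U₁ ∖ 0 and T*U₂ ∖ 0, then γ₁ ×̇ γ₂ is F_σ (respectively G_δ) in T*(U₁×U₂) ∖ 0. Consequently, if both γ₁ and γ₂ are simultaneously F_σ and G_δ (Δ₂⁰-cones), so is γ₁ ×̇ γ₂. -/
open Set

/-- A point of the (trivialized) cotangent space of `ℝ^d`: base point and covector. -/
abbrev Pt (d : ℕ) := (Fin d → ℝ) × (Fin d → ℝ)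

/-- The punctured cotangent bundle `T*U ∖ 0` over `U`. -/
def PT {d : ℕ} (U : Set (Fin d → ℝ)) : Set (Pt d) := {p | p.1 ∈ U ∧ p.2 ≠ 0}

/-- `γ` is a cone: stable under positive scaling of the covector. -/
def IsCone {d : ℕ} (γ : Set (Pt d)) : Prop :=
  ∀ p ∈ γ, ∀ t : ℝ, 0 < t → (p.1, t • p.2) ∈ γ

/-- Zero section over `U`. -/
def zeroSec {d : ℕ} (U : Set (Fin d → ℝ)) : Set (Pt d) := {p | p.1 ∈ U ∧ p.2 = 0}

/-- The dotted product `γ₁ ×̇ γ₂` of two cones, inside `T*(U₁×U₂) ∖ 0 ≅ T*U₁ × T*U₂`. -/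
def dotProd {d₁ d₂ : ℕ} (U₁ : Set (Fin d₁ → ℝ)) (U₂ : Set (Fin d₂ → ℝ))
    (γ₁ : Set (Pt d₁)) (γ₂ : Set (Pt d₂)) : Set (Pt d₁ × Pt d₂) :=
  (γ₁ ×ˢ γ₂) ∪ (γ₁ ×ˢ zeroSec U₂) ∪ (zeroSec U₁ ×ˢ γ₂)

/-- The punctured cotangent bundle of `U₁ × U₂`. -/
def PTprod {d₁ d₂ : ℕ} (U₁ : Set (Fin d₁ → ℝ)) (U₂ : Set (Fin d₂ → ℝ)) :
    Set (Pt d₁ × Pt d₂) :=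
  {q | q.1.1 ∈ U₁ ∧ q.2.1 ∈ U₂ ∧ (q.1.2 ≠ 0 ∨ q.2.2 ≠ 0)}

/-- `s` is closed in the subspace topology of `T` (for `s ⊆ T`). -/
def IsClosedWithin {α : Type*} [TopologicalSpace α] (T s : Set α) : Prop :=
  s ⊆ T ∧ closure s ∩ T ⊆ s

/-- Conic subsets of the product: simultaneous positive scaling of both covectors. -/
def IsConeProd {d₁ d₂ : ℕ} (γ : Set (Pt d₁ × Pt d₂)) : Prop :=
  ∀ q ∈ γ, ∀ t : ℝ, 0 < t → ((q.1.1, t • q.1.2), (q.2.1, t • q.2.2)) ∈ γ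

/-- Relative `F_σ`: countable union of relatively closed subsets of `T`. -/
def RelFsigma {α : Type*} [TopologicalSpace α] (T s : Set α) : Prop :=
  ∃ f : ℕ → Set α, (∀ n, IsClosedWithin T (f n)) ∧ s = ⋃ n, f n

/-- Relative `G_δ`: countable intersection of relatively open subsets of `T`. -/
def RelGdelta {α : Type*} [TopologicalSpace α] (T s : Set α) : Prop :=
  ∃ f : ℕ → Set α, (∀ n, IsOpen (f n)) ∧ s = T ∩ ⋂ n, f n

/-!
Over the base `U₁ × U₂`, a point of `γ₁ ×̇ γ₂` is a pair whose components each lie in `γᵢ`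
or in the zero section, not both in the zero section. So if `γᵢ = T*Uᵢ ∖ 0 ∩ Cᵢ`, then
`γ₁ ×̇ γ₂ = T*(U₁×U₂) ∖ 0 ∩ ((C₁ ∪ W₁) × (C₂ ∪ W₂))`, where `Wᵢ` is the closed set of points
with zero covector. Unions with a closed set and products preserve `G_δ` sets (closed sets are
`G_δ` in a metric space) and, dually, sets with `G_δ` complement, i.e. `F_σ` sets.
-/

section Relative

variable {α : Type*} [TopologicalSpace α] {T s : Set α}

theorem relGdelta_iff_exists_isGδ : RelGdelta T s ↔ ∃ G, IsGδ G ∧ s = T ∩ G := by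
  simp only [RelGdelta, isGδ_iff_eq_iInter_nat]
  constructor
  · rintro ⟨f, hf, rfl⟩
    exact ⟨_, ⟨f, hf, rfl⟩, rfl⟩
  · rintro ⟨_, ⟨f, hf, rfl⟩, rfl⟩
    exact ⟨f, hf, rfl⟩

theorem relFsigma_iff_exists_isGδ_compl : RelFsigma T s ↔ ∃ F, IsGδ Fᶜ ∧ s = T ∩ F := by
  simp only [RelFsigma, isGδ_iff_eq_iInter_nat]
  constructor
  · rintro ⟨f, hf, rfl⟩
    refine ⟨⋃ n, closure (f n), ⟨fun n => (closure (f n))ᶜ,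
      fun n => isClosed_closure.isOpen_compl, compl_iUnion _⟩, ?_⟩
    rw [inter_iUnion]
    exact iUnion_congr fun n => (subset_inter (hf n).1 subset_closure).antisymm
      (by rw [inter_comm]; exact (hf n).2)
  · rintro ⟨F, ⟨f, hf, hF⟩, rfl⟩
    refine ⟨fun n => T ∩ (f n)ᶜ, fun n => ⟨inter_subset_left, ?_⟩, ?_⟩
    · exact fun x ⟨hx, hxT⟩ => ⟨hxT, closure_minimal inter_subset_right (hf n).isClosed_compl hx⟩
    · rw [← inter_iUnion, ← compl_iInter, ← hF, compl_compl]

end Relative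

section Gδ

variable {α β : Type*} [TopologicalSpace α] [TopologicalSpace β] {s : Set α} {t : Set β}

theorem IsGδ.prod (hs : IsGδ s) (ht : IsGδ t) : IsGδ (s ×ˢ t) :=
  (hs.preimage continuous_fst).inter (ht.preimage continuous_snd)

theorem isGδ_compl_prod (hs : IsGδ sᶜ) (ht : IsGδ tᶜ) : IsGδ (s ×ˢ t)ᶜ := by
  rw [compl_prod_eq_union]
  exact (hs.prod IsGδ.univ).union (IsGδ.univ.prod ht)

theorem isGδ_compl_union_of_isClosed {c : Set α} (hs : IsGδ sᶜ) (hc : IsClosed c) :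
    IsGδ (s ∪ c)ᶜ := by
  rw [compl_union]
  exact hs.inter hc.isOpen_compl.isGδ

end Gδ

theorem isClosed_covector_eq_zero (d : ℕ) : IsClosed {p : Pt d | p.2 = 0} :=
  isClosed_eq continuous_snd continuous_const

theorem dotProd_inter_eq {d₁ d₂ : ℕ} (U₁ : Set (Fin d₁ → ℝ)) (U₂ : Set (Fin d₂ → ℝ))
    (C₁ : Set (Pt d₁)) (C₂ : Set (Pt d₂)) :
    dotProd U₁ U₂ (PT U₁ ∩ C₁) (PT U₂ ∩ C₂) =
      PTprod U₁ U₂ ∩ ((C₁ ∪ {p | p.2 = 0}) ×ˢ (C₂ ∪ {p | p.2 = 0})) := by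
  ext ⟨⟨x₁, ξ₁⟩, ⟨x₂, ξ₂⟩⟩
  simp only [dotProd, PT, PTprod, zeroSec, mem_union, mem_inter_iff, mem_prod, mem_ofPred_eq]
  tauto

theorem stmt_3_general {d₁ d₂ : ℕ} (U₁ : Set (Fin d₁ → ℝ)) (U₂ : Set (Fin d₂ → ℝ))
    (γ₁ : Set (Pt d₁)) (γ₂ : Set (Pt d₂)) :
    (RelFsigma (PT U₁) γ₁ → RelFsigma (PT U₂) γ₂ →
        RelFsigma (PTprod U₁ U₂) (dotProd U₁ U₂ γ₁ γ₂)) ∧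
    (RelGdelta (PT U₁) γ₁ → RelGdelta (PT U₂) γ₂ →
        RelGdelta (PTprod U₁ U₂) (dotProd U₁ U₂ γ₁ γ₂)) ∧
    ((RelFsigma (PT U₁) γ₁ ∧ RelGdelta (PT U₁) γ₁) →
      (RelFsigma (PT U₂) γ₂ ∧ RelGdelta (PT U₂) γ₂) →
        (RelFsigma (PTprod U₁ U₂) (dotProd U₁ U₂ γ₁ γ₂) ∧
          RelGdelta (PTprod U₁ U₂) (dotProd U₁ U₂ γ₁ γ₂))) := by
  have hFσ : RelFsigma (PT U₁) γ₁ → RelFsigma (PT U₂) γ₂ →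
      RelFsigma (PTprod U₁ U₂) (dotProd U₁ U₂ γ₁ γ₂) := by
    rw [relFsigma_iff_exists_isGδ_compl, relFsigma_iff_exists_isGδ_compl,
      relFsigma_iff_exists_isGδ_compl]
    rintro ⟨F₁, hF₁, rfl⟩ ⟨F₂, hF₂, rfl⟩
    exact ⟨_, isGδ_compl_prod (isGδ_compl_union_of_isClosed hF₁ (isClosed_covector_eq_zero d₁))
      (isGδ_compl_union_of_isClosed hF₂ (isClosed_covector_eq_zero d₂)),
      dotProd_inter_eq U₁ U₂ F₁ F₂⟩
  have hGδ : RelGdelta (PT U₁) γ₁ → RelGdelta (PT U₂) γ₂ →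
      RelGdelta (PTprod U₁ U₂) (dotProd U₁ U₂ γ₁ γ₂) := by
    rw [relGdelta_iff_exists_isGδ, relGdelta_iff_exists_isGδ, relGdelta_iff_exists_isGδ]
    rintro ⟨G₁, hG₁, rfl⟩ ⟨G₂, hG₂, rfl⟩
    exact ⟨_, (hG₁.union (isClosed_covector_eq_zero d₁).isGδ).prod
      (hG₂.union (isClosed_covector_eq_zero d₂).isGδ), dotProd_inter_eq U₁ U₂ G₁ G₂⟩
  exact ⟨hFσ, hGδ, fun h₁ h₂ => ⟨hFσ h₁.1 h₂.1, hGδ h₁.2 h₂.2⟩⟩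

/-- the dotted product of `F_σ` (resp. `G_δ`, resp. `Δ₂⁰`) cones is again
`F_σ` (resp. `G_δ`, resp. `Δ₂⁰`) in `T*(U₁×U₂) ∖ 0`. -/
theorem stmt_3 {d₁ d₂ : ℕ} (U₁ : Set (Fin d₁ → ℝ)) (U₂ : Set (Fin d₂ → ℝ))
    (hU₁ : IsOpen U₁) (hU₂ : IsOpen U₂)
    (γ₁ : Set (Pt d₁)) (γ₂ : Set (Pt d₂))
    (h₁ : γ₁ ⊆ PT U₁) (h₂ : γ₂ ⊆ PT U₂)
    (hc₁ : IsCone γ₁) (hc₂ : IsCone γ₂) :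
    (RelFsigma (PT U₁) γ₁ → RelFsigma (PT U₂) γ₂ →
        RelFsigma (PTprod U₁ U₂) (dotProd U₁ U₂ γ₁ γ₂)) ∧
    (RelGdelta (PT U₁) γ₁ → RelGdelta (PT U₂) γ₂ →
        RelGdelta (PTprod U₁ U₂) (dotProd U₁ U₂ γ₁ γ₂)) ∧
    ((RelFsigma (PT U₁) γ₁ ∧ RelGdelta (PT U₁) γ₁) →
      (RelFsigma (PT U₂) γ₂ ∧ RelGdelta (PT U₂) γ₂) →
        (RelFsigma (PTprod U₁ U₂) (dotProd U₁ U₂ γ₁ γ₂) ∧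
          RelGdelta (PTprod U₁ U₂) (dotProd U₁ U₂ γ₁ γ₂))) :=
  stmt_3_general U₁ U₂ γ₁ γ₂
end

section
/- Pullback of the dotted cone under the partial diagonal map avoids problematic zero-section points: let f_j : 𝒰 = U₁'×⋯×U_m'×U'×U₁×⋯×U_n → V×V' be defined by f_j(x₁,…,x_m,y,z₁,…,z_n) = (x₁,…,x_m,y,z₁,…,z_n,x_j) (doubling the j-th coordinate), so that df_j*(ξ₁,…,ξ_m,η,ζ₁,…,ζ_n,η') = (ξ₁,…,ξ_j+η',…,ξ_m,η,ζ₁,…,ζ_n). Let γ_a = (−γ₁ ×̇ ⋯ ×̇ −γ_n ×̇ γᶜ)ᶜ and γ_b = (−γ₁' ×̇ ⋯ ×̇ −γ_m' ×̇ (γ')ᶜ)ᶜ with γ_j' = γ. Then df_j*(γ_a ×̇ γ_b) intersected with the set where the j-th pulled-back covector ξ_j + η' vanishes (and the total covector is nonzero) is contained in the complement of −γ₁' ×̇ ⋯ ×̇ −γ_{j-1}' ×̇ {0} ×̇ ⋯ ×̇ −γ_m' ×̇ (γ')ᶜ ×̇ −γ₁ ×̇ ⋯ ×̇ −γ_n.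 -/
open Set

/-- Fiberwise negation of a cone. -/
def negCone {d : ℕ} (γ : Set (Pt d)) : Set (Pt d) := {p | (p.1, -p.2) ∈ γ}

/-- pullback of the dotted cone under the partial diagonal map
`f_j(x₁,…,x_m,y,z₁,…,z_n) = (x₁,…,x_m,y,z₁,…,z_n,x_j)` avoids the problematic points
with vanishing `j`-th pulled-back covector: membership of the covector data
`((ξ,η),(ζ,η'))` in `γ_b ×̇ γ_a` (with `γ_b = (−γ₁'×̇⋯×̇−γ_m'×̇(γ')ᶜ)ᶜ`,
`γ_a = (−γ₁×̇⋯×̇−γ_n×̇γᶜ)ᶜ`, `γ_j' = γ`) together with `ξ_j + η' = 0` forces the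
pulled-back point to lie outside
`−γ₁'×̇⋯×̇−γ_{j−1}'×̇{0}×̇⋯×̇−γ_m'×̇(γ')ᶜ×̇−γ₁×̇⋯×̇−γ_n`. -/
theorem stmt_8
    (m n : ℕ) (j : Fin m)
    (d' : Fin m → ℕ) (e : ℕ) (d : Fin n → ℕ)
    (U' : ∀ i : Fin m, Set (Fin (d' i) → ℝ)) (W : Set (Fin e → ℝ))
    (U : ∀ i : Fin n, Set (Fin (d i) → ℝ))
    (A : ∀ i : Fin m, Set (Pt (d' i))) (Γ' : Set (Pt e))
    (B : ∀ i : Fin n, Set (Pt (d i))) (Γ : Set (Pt (d' j)))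
    (hA : ∀ i, A i ⊆ PT (U' i)) (hΓ' : Γ' ⊆ PT W) (hB : ∀ i, B i ⊆ PT (U i))
    (hΓ : Γ ⊆ PT (U' j)) (hAj : A j = Γ)
    (hAc : ∀ i, IsCone (A i)) (hΓ'c : IsCone Γ') (hBc : ∀ i, IsCone (B i))
    -- the point data of a point of `T*(V' × V)`, where the last `V`-coordinate is `x j`
    (x : ∀ i : Fin m, Fin (d' i) → ℝ) (ξ : ∀ i : Fin m, Fin (d' i) → ℝ)
    (y : Fin e → ℝ) (η : Fin e → ℝ)
    (z : ∀ i : Fin n, Fin (d i) → ℝ) (ζ : ∀ i : Fin n, Fin (d i) → ℝ)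
    (η' : Fin (d' j) → ℝ)
    (hx : ∀ i, x i ∈ U' i) (hy : y ∈ W) (hz : ∀ i, z i ∈ U i)
    -- `((x,ξ),(y,η)) ∈ γ_b`, the complement of `−γ₁'×̇⋯×̇−γ_m'×̇(γ')ᶜ`
    (hb : ((∃ i, ξ i ≠ 0) ∨ η ≠ 0) ∧
      ¬ ((∀ i, (x i, ξ i) ∈ negCone (A i) ∨ ξ i = 0) ∧
          ((y, η) ∈ PT W \ Γ' ∨ η = 0)))
    -- `((z,ζ),(x j, η')) ∈ γ_a`, the complement of `−γ₁×̇⋯×̇−γ_n×̇γᶜ`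
    (ha : ((∃ i, ζ i ≠ 0) ∨ η' ≠ 0) ∧
      ¬ ((∀ i, (z i, ζ i) ∈ negCone (B i) ∨ ζ i = 0) ∧
          ((x j, η') ∈ PT (U' j) \ Γ ∨ η' = 0)))
    -- vanishing of the `j`-th pulled-back covector
    (hj : ξ j + η' = 0)
    -- the pulled-back total covector does not vanish
    (hnz : (∃ i, i ≠ j ∧ ξ i ≠ 0) ∨ η ≠ 0 ∨ ∃ i, ζ i ≠ 0) :
    ¬ ((((∀ i, i ≠ j → ((x i, ξ i) ∈ negCone (A i) ∨ ξ i = 0)) ∧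
          ((y, η) ∈ PT W \ Γ' ∨ η = 0) ∧
          (∀ i, (z i, ζ i) ∈ negCone (B i) ∨ ζ i = 0))) ∧
        ((∃ i, i ≠ j ∧ ξ i ≠ 0) ∨ η ≠ 0 ∨ ∃ i, ζ i ≠ 0)) := by
  rintro ⟨⟨hC1, hC2, hC3⟩, -⟩
  have ha2 : ¬ ((x j, η') ∈ PT (U' j) \ Γ ∨ η' = 0) := fun h => ha.2 ⟨hC3, h⟩
  push_neg at ha2
  obtain ⟨hnotin, hη'⟩ := ha2
  have hΓmem : (x j, η') ∈ Γ := by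
    by_contra hc
    exact hnotin ⟨⟨hx j, hη'⟩, hc⟩
  have hξj : (x j, ξ j) ∈ negCone (A j) := by
    rw [hAj]
    show (x j, -ξ j) ∈ Γ
    rw [← eq_neg_of_add_eq_zero_right hj]
    exact hΓmem
  exact hb.2 ⟨fun i => by
    by_cases h : i = j
    · subst h; exact Or.inl hξj
    · exact hC1 i h, hC2⟩
end

section
/- Polar families are stable under finite unions and the product-polar construction is enlargeable: if 𝓒₁ and 𝓒₂ are polar families of closed sets in U₁ and U₂ respectively (meaning 𝓒ᵢ = 𝓒ᵢ^{oo}), then 𝓒 = (𝓒₁ × 𝓒₂)^{oo} is a polar family of closed sets in U₁ × U₂, every polar family is stable under finite unions and under passage to closed subsets, and (𝓞_𝓒)^o = (𝓞_{𝓒₁}^o × 𝓞_{𝓒₂}^o)^{oo} when 𝓒₁, 𝓒₂ are moreover enlargeable. -/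
open Set

/-- The polar of a family of sets: closed sets with compact intersection with every
member of the family. -/
def polarFam {α : Type*} [TopologicalSpace α] (𝓐 : Set (Set α)) : Set (Set α) :=
  {B | IsClosed B ∧ ∀ A ∈ 𝓐, IsCompact (B ∩ A)}

/-- A polar family: equal to its own double polar. -/
def IsPolarFamily {α : Type*} [TopologicalSpace α] (𝓒 : Set (Set α)) : Prop :=
  𝓒 = polarFam (polarFam 𝓒)

lemma polarFam_antitone {α : Type*} [TopologicalSpace α] {S T : Set (Set α)} (h : S ⊆ T) :
    polarFam T ⊆ polarFam S := fun B hB => ⟨hB.1, fun A hA => hB.2 A (h hA)⟩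

lemma subset_biPolar {α : Type*} [TopologicalSpace α] {S : Set (Set α)}
    (hc : ∀ A ∈ S, IsClosed A) : S ⊆ polarFam (polarFam S) := by
  intro A hA
  exact ⟨hc A hA, fun B hB => Set.inter_comm A B ▸ hB.2 A hA⟩

lemma biPolar_isPolar {α : Type*} [TopologicalSpace α] {S : Set (Set α)}
    (hc : ∀ A ∈ S, IsClosed A) : IsPolarFamily (polarFam (polarFam S)) := by
  apply Set.Subset.antisymm
  · exact subset_biPolar (fun A hA => hA.1)
  · exact polarFam_antitone (subset_biPolar (fun A hA => hA.1))

lemma polar_F_eq_K {α : Type*} [TopologicalSpace α] [T2Space α] :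
    polarFam {F : Set α | IsClosed F} = {K : Set α | IsCompact K ∧ IsClosed K} := by
  ext B
  constructor
  · intro hB
    have := hB.2 Set.univ isClosed_univ
    rw [Set.inter_univ] at this
    exact ⟨this, hB.1⟩
  · intro hB
    exact ⟨hB.2, fun A hA => hB.1.inter_right hA⟩

lemma polar_K_eq_F {α : Type*} [TopologicalSpace α] [T2Space α] :
    polarFam {K : Set α | IsCompact K ∧ IsClosed K} = {F : Set α | IsClosed F} := by
  ext B
  constructor
  · exact fun hB => hB.1
  · intro hB
    exact ⟨hB, fun A hA => hA.1.inter_left hB⟩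

/-- the double polar of the product family `𝓒₁ × 𝓒₂` is a polar family of
closed sets in `U₁ × U₂`; every polar family is stable under finite unions and under
passage to closed subsets; and the compacts `𝓚` and all closed sets `𝓕` are mutually
polar families. -/
theorem stmt_10 {α β : Type*} [TopologicalSpace α] [T2Space α] [LocallyCompactSpace α]
    [TopologicalSpace β] [T2Space β] [LocallyCompactSpace β]
    (𝓒₁ : Set (Set α)) (𝓒₂ : Set (Set β))
    (h₁ : IsPolarFamily 𝓒₁) (h₂ : IsPolarFamily 𝓒₂) :
    -- the product polar construction gives a polar family of closed sets
    (IsPolarFamily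
        (polarFam (polarFam (Set.image2 (fun A B => A ×ˢ B) 𝓒₁ 𝓒₂))) ∧
      ∀ C ∈ polarFam (polarFam (Set.image2 (fun A B => A ×ˢ B) 𝓒₁ 𝓒₂)),
        IsClosed C) ∧
    -- polar families are stable under finite unions
    (∀ 𝓒 : Set (Set α), IsPolarFamily 𝓒 → ∀ A ∈ 𝓒, ∀ B ∈ 𝓒, A ∪ B ∈ 𝓒) ∧
    -- polar families are stable under closed subsets
    (∀ 𝓒 : Set (Set α), IsPolarFamily 𝓒 → ∀ A ∈ 𝓒, ∀ B : Set α,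
        IsClosed B → B ⊆ A → B ∈ 𝓒) ∧
    -- 𝓚 and 𝓕 are mutually polar
    ({K : Set α | IsCompact K ∧ IsClosed K} = polarFam {F : Set α | IsClosed F} ∧
      {F : Set α | IsClosed F} = polarFam {K : Set α | IsCompact K ∧ IsClosed K} ∧
      IsPolarFamily {F : Set α | IsClosed F} ∧
      IsPolarFamily {K : Set α | IsCompact K ∧ IsClosed K}) := by
  have hcl₁ : ∀ A ∈ 𝓒₁, IsClosed A := fun A hA => (h₁ ▸ hA).1
  have hcl₂ : ∀ A ∈ 𝓒₂, IsClosed A := fun A hA => (h₂ ▸ hA).1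
  refine ⟨⟨?_, fun C hC => hC.1⟩, ?_, ?_, polar_F_eq_K.symm, polar_K_eq_F.symm, ?_, ?_⟩
  · apply biPolar_isPolar
    rintro _ ⟨A, hA, B, hB, rfl⟩
    exact (hcl₁ A hA).prod (hcl₂ B hB)
  · intro 𝓒 h𝓒 A hA B hB
    rw [h𝓒] at hA hB ⊢
    refine ⟨hA.1.union hB.1, fun X hX => ?_⟩
    rw [Set.union_inter_distrib_right]
    exact (hA.2 X hX).union (hB.2 X hX)
  · intro 𝓒 h𝓒 A hA B hBc hBA
    rw [h𝓒] at hA ⊢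
    refine ⟨hBc, fun X hX => ?_⟩
    exact (hA.2 X hX).of_isClosed_subset (hBc.inter hX.1)
      (Set.inter_subset_inter_left X hBA)
  · rw [IsPolarFamily, polar_F_eq_K, polar_K_eq_F]
  · rw [IsPolarFamily, polar_K_eq_F, polar_F_eq_K]
end
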